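/- arXiv:1603.01900 — 3 statements merged into one kernel-verified Lean document; each statement's English description precedes it below -/
import Mathlib

section
/- Let u < ω and let T₁,…,Tₙ be pairwise disjoint monotone double trees each of order u+1. Then coll(T₁,…,Tₙ) is a monotone double tree of order u. -/
structure PreDF where
  X : Type
  le1 : X → X → Prop
  le2 : X → X → Prop

def IsForest {α : Type} (le : α → α → Prop) : Prop :=
  (∀ a, le a a) ∧ (∀ a b, le a b → le b a → a = b) ∧
  (∀ a b c, le a b → le b c → le a c) ∧
  (∀ a b c, le b a → le c a → le b c ∨ le c b)

def PreDF.IsDoubleForest (P : PreDF) : Prop :=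
  Finite P.X ∧ IsForest P.le1 ∧ IsForest P.le2 ∧
  (∀ a b, P.le2 a b → P.le1 a b) ∧
  (∀ a b c, P.le1 a b → P.le1 b c → P.le2 a c → P.le2 a b)

structure PreMDF where
  X : Type
  le1 : X → X → Prop
  le2 : X → X → Prop
  δ : X → ℕ

def PreMDF.toPreDF (T : PreMDF) : PreDF := ⟨T.X, T.le1, T.le2⟩

/-- A monotone double forest. -/
def PreMDF.IsMDF (T : PreMDF) : Prop :=
  T.toPreDF.IsDoubleForest ∧
  (∀ x y, T.le1 x y → T.δ y ≤ T.δ x) ∧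
  (∀ x y, T.le2 x y → T.δ x = T.δ y)

/-- A monotone double tree: a monotone double forest whose first order has a root. -/
def PreMDF.IsMDT (T : PreMDF) : Prop :=
  T.IsMDF ∧ ∃ r, ∀ y, T.le1 r y

/-- A monotone double tree whose root has label (order) `u`. -/
def PreMDF.IsMDTOfOrder (T : PreMDF) (u : ℕ) : Prop :=
  T.IsMDF ∧ ∃ r, (∀ y, T.le1 r y) ∧ T.δ r = u

/-- A covering of monotone double forests: an injection preserving both orders which
does not decrease labels. -/
def PreMDF.Covering (A B : PreMDF) : Prop :=
  ∃ h : A.X → B.X, Function.Injective h ∧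
    (∀ x y, A.le1 x y → B.le1 (h x) (h y)) ∧
    (∀ x y, A.le2 x y → B.le2 (h x) (h y)) ∧
    (∀ x, A.δ x ≤ B.δ (h x))

/-- `coll(T₁,…,Tₙ)` for trees of order `u+1`: add a fresh root `r` of label `u`,
with `r ≤₁` everything, `r ≤₂ y` iff `y = r` or `y` has label `u+1` in its tree,
and all labels capped at `u`.  (The inputs are replaced by canonically disjoint
copies via a sigma type.) -/
def coll (u : ℕ) (l : List PreMDF) : PreMDF where
  X := Option ((i : Fin l.length) × (l.get i).X)
  le1 := fun x y =>
    match x, y with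
    | none, _ => True
    | some _, none => False
    | some a, some b => ∃ h : b.1 = a.1, (l.get a.1).le1 a.2 (h ▸ b.2)
  le2 := fun x y =>
    match x, y with
    | none, none => True
    | none, some b => (l.get b.1).δ b.2 = u + 1
    | some _, none => False
    | some a, some b => ∃ h : b.1 = a.1, (l.get a.1).le2 a.2 (h ▸ b.2)
  δ := fun x =>
    match x with
    | none => u
    | some a => min ((l.get a.1).δ a.2) u

/-- `exp_u(T₁,…,Tₙ)`: add a fresh root of label `u` below pairwise disjoint copies of
the `Tᵢ`, with no nontrivial `≤₂`-relations from the root and labels unchanged. -/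
def expu (u : ℕ) (l : List PreMDF) : PreMDF where
  X := Option ((i : Fin l.length) × (l.get i).X)
  le1 := fun x y =>
    match x, y with
    | none, _ => True
    | some _, none => False
    | some a, some b => ∃ h : b.1 = a.1, (l.get a.1).le1 a.2 (h ▸ b.2)
  le2 := fun x y =>
    match x, y with
    | none, none => True
    | none, some _ => False
    | some _, none => False
    | some a, some b => ∃ h : b.1 = a.1, (l.get a.1).le2 a.2 (h ▸ b.2)
  δ := fun x =>
    match x with
    | none => u
    | some a => (l.get a.1).δ a.2

/-- The disjoint union `⊕(T₁,…,Tₘ)` of monotone double forests. -/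
def oplus (l : List PreMDF) : PreMDF where
  X := (i : Fin l.length) × (l.get i).X
  le1 := fun a b => ∃ h : b.1 = a.1, (l.get a.1).le1 a.2 (h ▸ b.2)
  le2 := fun a b => ∃ h : b.1 = a.1, (l.get a.1).le2 a.2 (h ▸ b.2)
  δ := fun a => (l.get a.1).δ a.2

/-- `Tˣ`: the substructure of `T` on the upward `≤₁`-cone above `x`. -/
def PreMDF.cone (T : PreMDF) (x : T.X) : PreMDF where
  X := {y : T.X // T.le1 x y}
  le1 := fun a b => T.le1 a.1 b.1
  le2 := fun a b => T.le2 a.1 b.1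
  δ := fun a => T.δ a.1

/-!
`coll(T₁,…,Tₙ)` is the disjoint union of the `Tᵢ` with a new root adjoined, which is `≤₂`-below
the set `S` of elements of label `u+1`. Adjoining such a root to a double forest gives again a
double forest as soon as `S` is closed upward under `≤₂` and downward under `≤₁`. Both hold here:
labels are constant along `≤₂`, and they are `≤₁`-antitone and bounded by the root label `u+1`, so
`S` is `≤₁`-downward closed. Capping all labels at `u` keeps them antitone along `≤₁` and constant
along `≤₂`, also for the pairs `r ≤₂ y`, where `y` has label `u+1`.
-/

-- The cast `h ▸ b.2` matches the relations of `coll` between non-root elements definitionally.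
def Sigma.FiberRel {ι : Type} {α : ι → Type} (R : ∀ i, α i → α i → Prop) (a b : Σ i, α i) :
    Prop :=
  ∃ h : b.1 = a.1, R a.1 a.2 (h ▸ b.2)

namespace Sigma.FiberRel

variable {ι : Type} {α : ι → Type} {R : ∀ i, α i → α i → Prop}

theorem mk_mk_iff {i : ι} {x y : α i} : FiberRel R ⟨i, x⟩ ⟨i, y⟩ ↔ R i x y :=
  ⟨fun ⟨_, h⟩ => h, fun h => ⟨rfl, h⟩⟩

theorem exists_of_mk_left {i : ι} {x : α i} {b : Σ i, α i} (h : FiberRel R ⟨i, x⟩ b) :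
    ∃ y, b = ⟨i, y⟩ ∧ R i x y := by
  obtain ⟨j, y⟩ := b
  obtain ⟨hji, h⟩ := h
  dsimp only at hji
  subst hji
  exact ⟨y, rfl, h⟩

theorem exists_of_mk_right {i : ι} {y : α i} {a : Σ i, α i} (h : FiberRel R a ⟨i, y⟩) :
    ∃ x, a = ⟨i, x⟩ ∧ R i x y := by
  obtain ⟨j, x⟩ := a
  obtain ⟨hij, h⟩ := h
  dsimp only at hij
  subst hij
  exact ⟨x, rfl, h⟩

theorem isForest (hR : ∀ i, IsForest (R i)) : IsForest (FiberRel R) := by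
  refine ⟨fun ⟨i, x⟩ => ⟨rfl, (hR i).1 x⟩, ?_, ?_, ?_⟩
  · rintro ⟨i, x⟩ b hxb hbx
    obtain ⟨y, rfl, hxy⟩ := exists_of_mk_left hxb
    rw [(hR i).2.1 x y hxy (mk_mk_iff.1 hbx)]
  · rintro ⟨i, x⟩ b c hxb hbc
    obtain ⟨y, rfl, hxy⟩ := exists_of_mk_left hxb
    obtain ⟨z, rfl, hyz⟩ := exists_of_mk_left hbc
    exact ⟨rfl, (hR i).2.2.1 x y z hxy hyz⟩
  · rintro ⟨i, x⟩ b c hbx hcx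
    obtain ⟨y, rfl, hyx⟩ := exists_of_mk_right hbx
    obtain ⟨z, rfl, hzx⟩ := exists_of_mk_right hcx
    exact ((hR i).2.2.2 x y z hyx hzx).imp mk_mk_iff.2 mk_mk_iff.2

end Sigma.FiberRel

def Option.RootRel {α : Type} (R : α → α → Prop) (S : α → Prop) : Option α → Option α → Prop
  | none, none => True
  | none, some b => S b
  | some _, none => False
  | some a, some b => R a b

namespace Option.RootRel

variable {α : Type} {R : α → α → Prop} {S : α → Prop}

@[simp] theorem none_none : RootRel R S none none := trivial

@[simp] theorem none_some (b : α) : RootRel R S none (some b) ↔ S b := Iff.rfl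

@[simp] theorem some_none (a : α) : ¬RootRel R S (some a) none := id

@[simp] theorem some_some (a b : α) : RootRel R S (some a) (some b) ↔ R a b := Iff.rfl

theorem isForest (hR : IsForest R) (hS : ∀ a b, R a b → (S a ↔ S b)) :
    IsForest (RootRel R S) := by
  obtain ⟨refl, antisymm, trans, total⟩ := hR
  refine ⟨?_, ?_, ?_, ?_⟩
  · rintro (_ | a) <;> simp [refl]
  · rintro (_ | a) (_ | b) <;> simp only [none_none, none_some, some_none, some_some] <;> grind
  · rintro (_ | a) (_ | b) (_ | c) <;> simp only [none_none, none_some, some_none, some_some] <;>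
      grind
  · rintro (_ | a) (_ | b) (_ | c) <;> simp only [none_none, none_some, some_none, some_some] <;>
      grind

end Option.RootRel

namespace PreDF

abbrev sigma {ι : Type} (F : ι → PreDF) : PreDF :=
  ⟨Σ i, (F i).X, Sigma.FiberRel fun i => (F i).le1, Sigma.FiberRel fun i => (F i).le2⟩

abbrev addRoot (P : PreDF) (S : P.X → Prop) : PreDF :=
  ⟨Option P.X, Option.RootRel P.le1 fun _ => True, Option.RootRel P.le2 S⟩

namespace IsDoubleForest

open Sigma Sigma.FiberRel in
theorem sigma {ι : Type} [Finite ι] {F : ι → PreDF} (hF : ∀ i, (F i).IsDoubleForest) :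
    (PreDF.sigma F).IsDoubleForest := by
  have : ∀ i, Finite (F i).X := fun i => (hF i).1
  refine ⟨inferInstanceAs (Finite (Σ i, (F i).X)), isForest fun i => (hF i).2.1,
    isForest fun i => (hF i).2.2.1, ?_, ?_⟩
  · rintro ⟨i, x⟩ b (hxb : FiberRel (fun i => (F i).le2) _ _)
    obtain ⟨y, rfl, hxy⟩ := exists_of_mk_left hxb
    exact ⟨rfl, (hF i).2.2.2.1 x y hxy⟩
  · rintro ⟨i, x⟩ b c (hxb : FiberRel (fun i => (F i).le1) _ _)
      (hbc : FiberRel (fun i => (F i).le1) _ _) hxc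
    obtain ⟨y, rfl, hxy⟩ := exists_of_mk_left hxb
    obtain ⟨z, rfl, hyz⟩ := exists_of_mk_left hbc
    exact ⟨rfl, (hF i).2.2.2.2 x y z hxy hyz (mk_mk_iff (R := fun i => (F i).le2) |>.1 hxc)⟩

open Option.RootRel in
theorem addRoot {P : PreDF} {S : P.X → Prop} (hP : P.IsDoubleForest)
    (hS₂ : ∀ a b, P.le2 a b → S a → S b) (hS₁ : ∀ a b, P.le1 a b → S b → S a) :
    (P.addRoot S).IsDoubleForest := by
  obtain ⟨hfin, hle1, hle2, hle21, hmixed⟩ := hP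
  refine ⟨inferInstanceAs (Finite (Option P.X)), isForest hle1 fun _ _ _ => Iff.rfl,
    isForest hle2 fun a b hab => ⟨hS₂ a b hab, hS₁ a b (hle21 a b hab)⟩, ?_, ?_⟩
  · rintro (_ | a) (_ | b) <;> simp only [none_none, none_some, some_none, some_some] <;> grind
  · rintro (_ | a) (_ | b) (_ | c) <;> simp only [none_none, none_some, some_none, some_some] <;>
      grind

end IsDoubleForest

end PreDF

namespace PreMDF.IsMDTOfOrder

variable {T : PreMDF} {n : ℕ}

theorem label_le (hT : T.IsMDTOfOrder n) (x : T.X) : T.δ x ≤ n := by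
  obtain ⟨⟨-, hanti, -⟩, r, hr, rfl⟩ := hT
  exact hanti r x (hr x)

theorem label_eq_of_le1 (hT : T.IsMDTOfOrder n) {x y : T.X} (hxy : T.le1 x y) (hy : T.δ y = n) :
    T.δ x = n :=
  (hT.label_le x).antisymm (hy ▸ hT.1.2.1 x y hxy)

end PreMDF.IsMDTOfOrder

section coll

open Sigma Sigma.FiberRel

variable (u : ℕ) (l : List PreMDF)

theorem coll_le1 :
    (coll u l).le1 = Option.RootRel (FiberRel fun i => (l.get i).le1) fun _ => True := by
  funext x y
  cases x <;> cases y <;> rfl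

theorem coll_le2 : (coll u l).le2 =
    Option.RootRel (FiberRel fun i => (l.get i).le2) fun a => (l.get a.1).δ a.2 = u + 1 := by
  funext x y
  cases x <;> cases y <;> rfl

theorem coll_toPreDF : (coll u l).toPreDF =
    (PreDF.sigma fun i => (l.get i).toPreDF).addRoot fun a => (l.get a.1).δ a.2 = u + 1 := by
  rw [PreMDF.toPreDF, coll_le1, coll_le2]
  rfl

theorem coll_isDoubleForest (hl : ∀ T ∈ l, T.IsMDTOfOrder (u + 1)) :
    (coll u l).toPreDF.IsDoubleForest := by
  have hT i : (l.get i).IsMDTOfOrder (u + 1) := hl _ (l.get_mem i)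
  rw [coll_toPreDF]
  refine .addRoot (.sigma fun i => (hT i).1.1) ?_ ?_
  · rintro ⟨i, x⟩ b (hxb : FiberRel (fun i => (l.get i).le2) _ _) hx
    obtain ⟨y, rfl, hxy⟩ := exists_of_mk_left hxb
    exact (hT i).1.2.2 x y hxy ▸ hx
  · rintro a ⟨i, y⟩ (hay : FiberRel (fun i => (l.get i).le1) _ _) hy
    obtain ⟨x, rfl, hxy⟩ := exists_of_mk_right hay
    exact (hT i).label_eq_of_le1 hxy hy

variable {u l}

theorem coll_label_antitone (hl : ∀ T ∈ l, T.IsMDF) (x y : (coll u l).X)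
    (hxy : (coll u l).le1 x y) : (coll u l).δ y ≤ (coll u l).δ x := by
  rw [coll_le1] at hxy
  rcases x with _ | ⟨i, x⟩ <;> rcases y with _ | b
  · exact le_rfl
  · exact min_le_right _ _
  · exact hxy.elim
  · obtain ⟨y, rfl, hle⟩ := exists_of_mk_left ((Option.RootRel.some_some _ _).1 hxy)
    exact min_le_min_right u ((hl _ (l.get_mem i)).2.1 x y hle)

theorem coll_label_eq_of_le2 (hl : ∀ T ∈ l, T.IsMDF) (x y : (coll u l).X)
    (hxy : (coll u l).le2 x y) : (coll u l).δ x = (coll u l).δ y := by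
  rw [coll_le2] at hxy
  rcases x with _ | ⟨i, x⟩ <;> rcases y with _ | b
  · rfl
  · exact (min_eq_right (hxy.symm ▸ u.le_succ)).symm
  · exact hxy.elim
  · obtain ⟨y, rfl, hle⟩ := exists_of_mk_left ((Option.RootRel.some_some _ _).1 hxy)
    exact congrArg (min · u) ((hl _ (l.get_mem i)).2.2 x y hle)

end coll

/-- If `T₁,…,Tₙ` are (pairwise disjoint copies of) monotone double trees of order `u+1`,
then `coll(T₁,…,Tₙ)` is a monotone double tree of order `u`. -/
theorem coll_isMDT (u : ℕ) (l : List PreMDF) (h : ∀ T ∈ l, T.IsMDTOfOrder (u + 1)) :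
    (coll u l).IsMDTOfOrder u := by
  have hMDF : ∀ T ∈ l, T.IsMDF := fun T hT => (h T hT).1
  exact ⟨⟨coll_isDoubleForest u l h, coll_label_antitone hMDF, coll_label_eq_of_le2 hMDF⟩,
    none, fun _ => trivial, rfl⟩
end

section
/- Let u < ω and let T₁,…,Tₘ and S₁,…,Sₙ be monotone double trees of order u+1, each list pairwise disjoint. If there is a covering of coll(T₁,…,Tₘ) into coll(S₁,…,Sₙ), then either there is a covering of ⊕(T₁,…,Tₘ) into ⊕(S₁,…,Sₙ), or there exist j with 1 ≤ j ≤ n and x ∈ |Sⱼ| of order u such that there is a covering of coll(T₁,…,Tₘ) into Sⱼˣ. -/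
/-!
Let `f : coll(T₁,…,Tₘ) → coll(S₁,…,Sₙ)` be a covering. If `f` fixes the root, the root's
`≤₂`-successors (the points of label `u+1`) are sent to points of label `u+1`, so `f` restricts
to a covering of `⊕Tᵢ` into `⊕Sᵢ`. Otherwise `f` sends the root to a point `x` of some `Sⱼ`, and
everything else into the cone above `x`; the label of `x` is `u` or `u+1`. If it is `u`, `f`
is a covering into `Sⱼˣ`. If it is `u+1`, the points of label `u+1` are sent into the
`≤₂`-class of `x`, on which the label is constantly `u+1`, and `f` again restricts to a covering
of `⊕Tᵢ` into `⊕Sᵢ`. -/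

namespace PreMDF

def IsCoveringMap (A B : PreMDF) (h : A.X → B.X) : Prop :=
  Function.Injective h ∧
    (∀ x y, A.le1 x y → B.le1 (h x) (h y)) ∧
    (∀ x y, A.le2 x y → B.le2 (h x) (h y)) ∧
    (∀ x, A.δ x ≤ B.δ (h x))

theorem covering_iff_exists_isCoveringMap {A B : PreMDF} :
    A.Covering B ↔ ∃ h, A.IsCoveringMap B h :=
  Iff.rfl

theorem IsMDTOfOrder.δ_le {T : PreMDF} {n : ℕ} (hT : T.IsMDTOfOrder n) (x : T.X) :
    T.δ x ≤ n := by
  obtain ⟨⟨_, hanti, _⟩, r, hr, rfl⟩ := hT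
  exact hanti r x (hr x)

theorem IsCoveringMap.covering_cone {A B : PreMDF} {h : A.X → B.X} (hh : A.IsCoveringMap B h)
    {x : B.X} (hx : ∀ a, B.le1 x (h a)) : A.Covering (B.cone x) :=
  ⟨fun a => ⟨h a, hx a⟩, fun _ _ hab => hh.1 (congrArg Subtype.val hab), hh.2.1, hh.2.2.1,
    hh.2.2.2⟩

end PreMDF

open PreMDF

section Coll

variable {u : ℕ} {l : List PreMDF}

theorem oplus_δ_le {n : ℕ} (hl : ∀ T ∈ l, T.IsMDTOfOrder n) (a : (oplus l).X) :
    (oplus l).δ a ≤ n :=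
  (hl _ (l.get_mem a.1)).δ_le a.2

theorem coll_le1_some_iff {i : Fin l.length} {p : (l.get i).X} {y : (coll u l).X} :
    (coll u l).le1 (some ⟨i, p⟩) y ↔ ∃ q, y = some ⟨i, q⟩ ∧ (l.get i).le1 p q := by
  constructor
  · rcases y with _ | ⟨j, q⟩
    · exact False.elim
    · rintro ⟨h, hq⟩
      change j = i at h
      subst h
      exact ⟨q, rfl, hq⟩
  · rintro ⟨q, rfl, hq⟩
    exact ⟨rfl, hq⟩

theorem exists_get_factor_of_root_eq_some {A : PreMDF} {r : A.X} (hr : ∀ a, A.le1 r a)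
    {f : A.X → (coll u l).X} (hf : ∀ a b, A.le1 a b → (coll u l).le1 (f a) (f b))
    {i : Fin l.length} {x : (l.get i).X} (hfr : f r = some ⟨i, x⟩) :
    ∃ g : A.X → (l.get i).X, ∀ a, f a = some ⟨i, g a⟩ ∧ (l.get i).le1 x (g a) := by
  have hle : ∀ a, (coll u l).le1 (some ⟨i, x⟩) (f a) := fun a => hfr ▸ hf r a (hr a)
  choose g hg using fun a => coll_le1_some_iff.mp (hle a)
  exact ⟨g, hg⟩

theorem PreMDF.IsCoveringMap.get_of_eq_some {A : PreMDF} {f : A.X → (coll u l).X}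
    (hf : A.IsCoveringMap (coll u l) f) {i : Fin l.length} (g : A.X → (l.get i).X)
    (hfg : ∀ a, f a = some ⟨i, g a⟩) : A.IsCoveringMap (l.get i) g := by
  obtain ⟨hinj, h1, h2, hδ⟩ := hf
  refine ⟨fun a b hab => hinj (by rw [hfg, hfg, hab]), fun a b hab => ?_, fun a b hab => ?_,
    fun a => ?_⟩
  · obtain ⟨_, h⟩ := hfg a ▸ hfg b ▸ h1 a b hab
    exact h
  · obtain ⟨_, h⟩ := hfg a ▸ hfg b ▸ h2 a b hab
    exact h
  · exact (hfg a ▸ hδ a).trans (min_le_left _ _)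

theorem PreMDF.IsCoveringMap.oplus_of_coll {Ts Ss : List PreMDF} (hTs : ∀ a : (oplus Ts).X,
    (oplus Ts).δ a ≤ u + 1) {f : (coll u Ts).X → (coll u Ss).X}
    (hf : (coll u Ts).IsCoveringMap (coll u Ss) f)
    (g : (i : Fin Ts.length) × (Ts.get i).X → (i : Fin Ss.length) × (Ss.get i).X)
    (hfg : ∀ a, f (some a) = some (g a))
    (htop : ∀ b, (coll u Ss).le2 (f none) (some b) → (oplus Ss).δ b = u + 1) :
    (oplus Ts).IsCoveringMap (oplus Ss) g := by
  obtain ⟨hinj, h1, h2, hδ⟩ := hf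
  refine ⟨fun a b hab => Option.some.inj (hinj ((hfg a).trans (hab ▸ hfg b).symm)),
    fun a b hab => (congrArg₂ (coll u Ss).le1 (hfg a) (hfg b)).mp (h1 (some a) (some b) hab),
    fun a b hab => (congrArg₂ (coll u Ss).le2 (hfg a) (hfg b)).mp (h2 (some a) (some b) hab),
    fun a => ?_⟩
  rcases (hTs a).lt_or_eq with hlt | htopa
  · have hmin : min ((oplus Ts).δ a) u ≤ min ((oplus Ss).δ (g a)) u :=
      (hδ (some a)).trans_eq (congrArg (coll u Ss).δ (hfg a))
    omega
  · have hle2 := (congrArg ((coll u Ss).le2 (f none)) (hfg a)).mp (h2 none (some a) htopa)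
    exact htopa.trans_le (htop (g a) hle2).ge

end Coll

/-- If `T₁,…,Tₘ` and `S₁,…,Sₙ` are monotone double trees of order `u+1` and there is a
covering of `coll(T₁,…,Tₘ)` into `coll(S₁,…,Sₙ)`, then either there is a covering of
`⊕(T₁,…,Tₘ)` into `⊕(S₁,…,Sₙ)`, or there are `j` and `x ∈ |Sⱼ|` of order `u` with a
covering of `coll(T₁,…,Tₘ)` into `Sⱼˣ`. -/
theorem coll_covering_cases (u : ℕ) (Ts Ss : List PreMDF)
    (hT : ∀ T ∈ Ts, T.IsMDTOfOrder (u + 1)) (hS : ∀ S ∈ Ss, S.IsMDTOfOrder (u + 1))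
    (h : (coll u Ts).Covering (coll u Ss)) :
    (oplus Ts).Covering (oplus Ss) ∨
      ∃ (j : Fin Ss.length) (x : (Ss.get j).X),
        (Ss.get j).δ x = u ∧ (coll u Ts).Covering ((Ss.get j).cone x) := by
  obtain ⟨f, hf⟩ := covering_iff_exists_isCoveringMap.mp h
  rcases hroot : f none with _ | ⟨j, x⟩
  · choose g hg using fun a => Option.ne_none_iff_exists'.mp fun ha =>
      Option.some_ne_none a (hf.1 (ha.trans hroot.symm))
    exact .inl ⟨g, hf.oplus_of_coll (oplus_δ_le hT) g hg (by rw [hroot]; exact fun _ => id)⟩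
  obtain ⟨g, hg⟩ := exists_get_factor_of_root_eq_some (fun _ => trivial) hf.2.1 hroot
  have hux : u ≤ (Ss.get j).δ x :=
    ((hf.2.2.2 none).trans_eq (congrArg (coll u Ss).δ hroot)).trans (min_le_left _ _)
  rcases ((hS _ (Ss.get_mem j)).δ_le x).lt_or_eq with hlt | hxtop
  · have hgcov := hf.get_of_eq_some g fun a => (hg a).1
    exact .inr ⟨j, x, by omega, hgcov.covering_cone fun a => (hg a).2⟩
  · refine .inl ⟨fun a => ⟨j, g (some a)⟩,
      hf.oplus_of_coll (oplus_δ_le hT) _ (fun a => (hg _).1) ?_⟩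
    rw [hroot]
    rintro ⟨i, y⟩ ⟨hij, hxy⟩
    change i = j at hij
    subst hij
    exact ((hS _ (Ss.get_mem i)).1.2.2 x y hxy).symm.trans hxtop
end

section
/- Let T₁,…,Tₖ be an order-descending sequence of monotone double trees and u < ω with u < ord(Tₖ). Then the number of nodes of Ψᵤ(T₁,…,Tₖ) equals |T₁| + … + |Tₖ| + (ord(T₁) − u). -/
/-- A single node of label `u`. -/
def singleNode (u : ℕ) : PreMDF :=
  ⟨PUnit, fun _ _ => True, fun _ _ => True, fun _ => u⟩

/-- The order of the first tree in a list of (tree, order) pairs. -/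
def headOrd (l : List (PreMDF × ℕ)) : ℕ :=
  (l.headD (singleNode 0, 0)).2

def Psi (u : ℕ) (l : List (PreMDF × ℕ)) : PreMDF :=
  match l with
  | [] => singleNode u
  | a :: as =>
    if u < ((a :: as).getLast (by simp)).2 then
      if hc : u + 1 < a.2 then
        coll u (Psi (u + 1) ((a :: as).takeWhile (fun p => decide (u + 1 < p.2)))
          :: ((a :: as).dropWhile (fun p => decide (u + 1 < p.2))).map Prod.fst)
      else coll u ((a :: as).map Prod.fst)
    else
      if he : u < a.2 then
        expu u (Psi u ((a :: as).takeWhile (fun p => decide (u < p.2)))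
          :: ((a :: as).dropWhile (fun p => decide (u < p.2))).map Prod.fst)
      else expu u ((a :: as).map Prod.fst)
termination_by l.length + (headOrd l - u)
decreasing_by
  · have htw : (a :: as).takeWhile (fun p => decide (u + 1 < p.2)) =
        a :: as.takeWhile (fun p => decide (u + 1 < p.2)) := by
      simp [List.takeWhile_cons, hc]
    have hlen : (as.takeWhile (fun p => decide (u + 1 < p.2))).length ≤ as.length :=
      (List.takeWhile_prefix _).length_le
    simp only [htw, headOrd, List.headD, List.length_cons]
    omega
  · rename_i hlast
    have htw : (a :: as).takeWhile (fun p => decide (u < p.2)) =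
        a :: as.takeWhile (fun p => decide (u < p.2)) := by
      simp [List.takeWhile_cons, he]
    have hlen : (as.takeWhile (fun p => decide (u < p.2))).length < as.length := by
      rcases eq_or_ne as [] with rfl | hne
      · exfalso; apply hlast; simpa using he
      · have hle : (as.takeWhile (fun p => decide (u < p.2))).length ≤ as.length :=
          (List.takeWhile_prefix _).length_le
        rcases lt_or_eq_of_le hle with h | h
        · exact h
        · exfalso
          have heq : as.takeWhile (fun p => decide (u < p.2)) = as :=
            (List.takeWhile_prefix _).eq_of_length h
          have hall : ∀ b ∈ as, (fun p : PreMDF × ℕ => decide (u < p.2)) b :=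
            List.takeWhile_eq_self_iff.mp heq
          have hmem : as.getLast hne ∈ as := List.getLast_mem hne
          have := hall _ hmem
          apply hlast
          rw [List.getLast_cons hne]
          simpa using this
    simp only [htw, headOrd, List.headD, List.length_cons]
    omega

lemma Nat.card_coll (u : ℕ) (l : List PreMDF) (hfin : ∀ T ∈ l, Finite T.X) :
    Nat.card (coll u l).X = (l.map fun T => Nat.card T.X).sum + 1 := by
  have (i : Fin l.length) : Finite (l.get i).X := hfin _ (List.get_mem l i)
  change Nat.card (Option ((i : Fin l.length) × (l.get i).X)) = _
  rw [Finite.card_option, Nat.card_sigma, ← Fin.sum_univ_fun_getElem l fun T => Nat.card T.X]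
  rfl

lemma List.IsChain.snd_getLast_le_snd_head {α : Type*} {l : List (α × ℕ)} (hne : l ≠ [])
    (h : l.IsChain fun p q => q.2 ≤ p.2) : (l.getLast hne).2 ≤ (l.head hne).2 := by
  have := (List.relationReflTransGen_of_exists_isChain l h hne).lift (p := (· ≥ ·))
    Prod.snd fun _ _ h => h
  rwa [Relation.reflTransGen_eq_self] at this

theorem Nat.card_Psi (u : ℕ) (l : List (PreMDF × ℕ)) (hne : l ≠ [])
    (hfin : ∀ p ∈ l, Finite p.1.X) (hhead : u < (l.head hne).2)
    (hlast : u < (l.getLast hne).2) :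
    Nat.card (Psi u l).X = (l.map fun p => Nat.card p.1.X).sum + ((l.head hne).2 - u) := by
  match l, hne with
  | a :: as, hne =>
    simp only [List.head_cons] at hhead ⊢
    rw [Psi, if_pos hlast]
    split_ifs with hc
    · set tw := (a :: as).takeWhile fun p => decide (u + 1 < p.2) with htw_def
      set dw := (a :: as).dropWhile fun p => decide (u + 1 < p.2)
      have htw : tw = a :: as.takeWhile fun p => decide (u + 1 < p.2) := by
        simp [htw_def, hc]
      have hne_tw : tw ≠ [] := by simp [htw]
      have hhead_tw : tw.head hne_tw = a := by simp only [htw, List.head_cons]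
      have hcard_tw := Nat.card_Psi (u + 1) tw hne_tw
        (fun p hp => hfin p ((List.takeWhile_sublist _).subset hp)) (by rwa [hhead_tw])
        (by simpa using List.mem_takeWhile_imp (List.getLast_mem hne_tw))
      rw [hhead_tw] at hcard_tw
      have : Finite (Psi (u + 1) tw).X := Nat.finite_of_card_ne_zero (by omega)
      have hsplit : a :: as = tw ++ dw := (List.takeWhile_append_dropWhile ..).symm
      rw [Nat.card_coll]
      · rw [hsplit, List.map_append, List.sum_append]
        simp only [List.map_cons, List.sum_cons, List.map_map, Function.comp_def, hcard_tw]
        omega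
      · simp only [List.mem_cons, List.mem_map]
        rintro T (rfl | ⟨p, hp, rfl⟩)
        exacts [this, hfin p ((List.dropWhile_sublist _).subset hp)]
    · rw [Nat.card_coll _ _ (by simpa using hfin), List.map_map]
      simp only [Function.comp_def]
      omega
termination_by (l.head hne).2 - u
decreasing_by simp_all; omega

/-- If `T₁,…,Tₖ` is an order-descending sequence of monotone double trees (with orders
`v₁ ≥ … ≥ vₖ`) and `u < vₖ`, then `Ψ_u(T₁,…,Tₖ)` has exactly
`|T₁| + … + |Tₖ| + (v₁ - u)` nodes. -/
theorem psi_card (u : ℕ) (l : List (PreMDF × ℕ)) (hne : l ≠ [])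
    (hT : ∀ p ∈ l, p.1.IsMDTOfOrder p.2)
    (hdesc : l.Chain' (fun p q => q.2 ≤ p.2))
    (hu : u < (l.getLast hne).2) :
    Nat.card (Psi u l).X =
      (l.map (fun p => Nat.card p.1.X)).sum + ((l.head hne).2 - u) :=
  Nat.card_Psi u l hne (fun p hp => (hT p hp).1.1.1)
    (hu.trans_le (hdesc.snd_getLast_le_snd_head hne)) hu
end
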